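/- Assume moreover that $K$ has characteristic different from $2$. Then $L$ is generated as a field by $K$, the elements $z_n$ for $n \in \mathbb{Z}/m\mathbb{Z}$, and the single element $\delta$; that is, the smallest subfield of $L$ containing $K \cup \{z_n : n \in \mathbb{Z}/m\mathbb{Z}\} \cup \{\delta\}$ is $L$ itself. -/
import Mathlib


/- Setting: `Lm K m` is the field of fractions of the (Laurent) polynomial ring over a field
`K` in commuting variables `yv n` indexed by `n : ZMod m`, with fixed scalars `F n : K`. -/

noncomputable section

variable (K : Type) [Field K] (m : ℕ) [NeZero m]

/-- The ambient field `L`. -/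
abbrev Lm := FractionRing (MvPolynomial (ZMod m) K)

/-- The variable `y_n`. -/
def yv (n : ZMod m) : Lm K m :=
  algebraMap (MvPolynomial (ZMod m) K) (Lm K m) (MvPolynomial.X n)

variable (F : ZMod m → K)

/-- The scalar `F_n` viewed inside `L`. -/
def Fc (n : ZMod m) : Lm K m := algebraMap K (Lm K m) (F n)

/-- `X_n = F_n / (y_n y_{n+1})`. -/
def Xv (n : ZMod m) : Lm K m := Fc K m F n / (yv K m n * yv K m (n + 1))

/-- `P_n = 1 + ∑_{k=0}^{m-2} X_n X_{n-1} ⋯ X_{n-k}`. -/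
def Pv (n : ZMod m) : Lm K m :=
  1 + ∑ k ∈ Finset.range (m - 1), ∏ j ∈ Finset.range (k + 1), Xv K m F (n - (j : ZMod m))

/-- `z_n = y_n (1 + X_n)`. -/
def zv (n : ZMod m) : Lm K m := yv K m n * (1 + Xv K m F n)

/-- `𝐲 = ∏_n y_n`. -/
def boldy : Lm K m := ∏ n : ZMod m, yv K m n

/-- `𝐅 = ∏_n F_n` (viewed in `L`). -/
def boldF : Lm K m := ∏ n : ZMod m, Fc K m F n

/-- `δ = 𝐲 - 𝐅/𝐲`. -/
def deltav : Lm K m := boldy K m - boldF K m F / boldy K m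

/-! ### Auxiliary lemmas -/

lemma yv_ne_zero (n : ZMod m) : yv K m n ≠ 0 := by
  intro h
  have h0 : algebraMap (MvPolynomial (ZMod m) K) (Lm K m) (MvPolynomial.X n)
      = algebraMap (MvPolynomial (ZMod m) K) (Lm K m) 0 := by rw [map_zero]; exact h
  exact MvPolynomial.X_ne_zero (R := K) n
    (IsFractionRing.injective (MvPolynomial (ZMod m) K) (Lm K m) h0)

lemma Fc_ne_zero (hF : ∀ n, F n ≠ 0) (n : ZMod m) : Fc K m F n ≠ 0 := by
  intro h
  exact hF n ((map_eq_zero _).mp h)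

/-- The basic relation `z_n y_{n+1} = y_n y_{n+1} + F_n`. -/
lemma zv_mul (n : ZMod m) :
    zv K m F n * yv K m (n + 1) = yv K m n * yv K m (n + 1) + Fc K m F n := by
  have h1 := yv_ne_zero K m n
  have h2 := yv_ne_zero K m (n + 1)
  unfold zv Xv
  field_simp

/-- Reindexing products over `range m` by `ZMod m`. -/
lemma prod_range_zmod (g : ZMod m → Lm K m) :
    ∏ j ∈ Finset.range m, g (j : ZMod m) = ∏ n : ZMod m, g n := by
  apply Finset.prod_nbij' (fun j => ((j : ℕ) : ZMod m)) (fun n => n.val)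
  · intro a _; exact Finset.mem_univ _
  · intro a _; exact Finset.mem_range.mpr (ZMod.val_lt a)
  · intro a ha; exact ZMod.val_cast_of_lt (Finset.mem_range.mp ha)
  · intro a _; exact ZMod.natCast_rightInverse a
  · intro a _; rfl

/-- The transfer-matrix product `M_{-k} ⋯ M_{-1}` as a 4-tuple `(a, b, c, d)`,
where `M_n = [[z_n, -F_n], [1, 0]]`. -/
def Qr : ℕ → Lm K m × Lm K m × Lm K m × Lm K m
  | 0 => (1, 0, 0, 1)
  | (k + 1) =>
      (zv K m F (-((k : ZMod m) + 1)) * (Qr k).1 - Fc K m F (-((k : ZMod m) + 1)) * (Qr k).2.2.1,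
       zv K m F (-((k : ZMod m) + 1)) * (Qr k).2.1 - Fc K m F (-((k : ZMod m) + 1)) * (Qr k).2.2.2,
       (Qr k).1, (Qr k).2.1)

lemma Qr_spec (k : ℕ) :
    (Qr K m F k).1 * yv K m 0 + (Qr K m F k).2.1
      = (∏ j ∈ Finset.range k, yv K m (-(j : ZMod m))) * yv K m (-(k : ZMod m)) ∧
    (Qr K m F k).2.2.1 * yv K m 0 + (Qr K m F k).2.2.2
      = ∏ j ∈ Finset.range k, yv K m (-(j : ZMod m)) := by
  induction k with
  | zero => simp [Qr]
  | succ k ih =>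
      obtain ⟨h1, h2⟩ := ih
      have key := zv_mul K m F (-((k : ZMod m) + 1))
      have hidx : (-((k : ZMod m) + 1)) + 1 = -(k : ZMod m) := by ring
      rw [hidx] at key
      have hcast : (((k + 1 : ℕ)) : ZMod m) = (k : ZMod m) + 1 := by push_cast; ring
      simp only [Qr, Finset.prod_range_succ, hcast, neg_add]
      constructor
      · have : -(k : ZMod m) + -1 = -((k : ZMod m) + 1) := by ring
        rw [this]
        linear_combination zv K m F (-((k : ZMod m) + 1)) * h1
          - Fc K m F (-((k : ZMod m) + 1)) * h2
          + (∏ j ∈ Finset.range k, yv K m (-(j : ZMod m))) * key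
      · exact h1

lemma Qr_det (k : ℕ) :
    (Qr K m F k).1 * (Qr K m F k).2.2.2 - (Qr K m F k).2.1 * (Qr K m F k).2.2.1
      = ∏ j ∈ Finset.range k, Fc K m F (-((j : ZMod m) + 1)) := by
  induction k with
  | zero => simp [Qr]
  | succ k ih =>
      simp only [Qr, Finset.prod_range_succ]
      linear_combination Fc K m F (-((k : ZMod m) + 1)) * ih

lemma Qr_mem (E : IntermediateField K (Lm K m))
    (hz : ∀ n, zv K m F n ∈ E) (k : ℕ) :
    (Qr K m F k).1 ∈ E ∧ (Qr K m F k).2.1 ∈ E ∧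
    (Qr K m F k).2.2.1 ∈ E ∧ (Qr K m F k).2.2.2 ∈ E := by
  induction k with
  | zero => simp only [Qr]; exact ⟨one_mem E, zero_mem E, zero_mem E, one_mem E⟩
  | succ k ih =>
      obtain ⟨ha, hb, hc, hd⟩ := ih
      have hFc : ∀ n, Fc K m F n ∈ E := fun n => E.algebraMap_mem (F n)
      exact ⟨sub_mem (mul_mem (hz _) ha) (mul_mem (hFc _) hc),
        sub_mem (mul_mem (hz _) hb) (mul_mem (hFc _) hd), ha, hb⟩

lemma boldy_ne_zero : boldy K m ≠ 0 :=
  Finset.prod_ne_zero_iff.mpr fun n _ => yv_ne_zero K m n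

lemma boldy_sq_ne (hF : ∀ n, F n ≠ 0) : boldy K m * boldy K m ≠ boldF K m F := by
  intro h
  have hinj := IsFractionRing.injective (MvPolynomial (ZMod m) K) (Lm K m)
  have hb : boldy K m
      = algebraMap (MvPolynomial (ZMod m) K) (Lm K m) (∏ n : ZMod m, MvPolynomial.X n) := by
    rw [map_prod]; rfl
  have hBF : boldF K m F
      = algebraMap (MvPolynomial (ZMod m) K) (Lm K m) (MvPolynomial.C (∏ n : ZMod m, F n)) := by
    unfold boldF Fc
    rw [← map_prod]
    rw [IsScalarTower.algebraMap_apply K (MvPolynomial (ZMod m) K) (Lm K m),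
      MvPolynomial.algebraMap_eq]
  rw [hb, hBF, ← map_mul] at h
  have h2 := hinj h
  have h3 := congrArg MvPolynomial.constantCoeff h2
  rw [map_mul, map_prod] at h3
  simp only [MvPolynomial.constantCoeff_X, MvPolynomial.constantCoeff_C] at h3
  rw [Finset.prod_eq_zero (Finset.mem_univ (0 : ZMod m)) rfl, zero_mul] at h3
  exact Finset.prod_ne_zero_iff.mpr (fun n _ => hF n) h3.symm

set_option maxHeartbeats 1000000 in
theorem stmt_6 (hm : 2 ≤ m) (hF : ∀ n, F n ≠ 0) (hchar : ringChar K ≠ 2) :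
    IntermediateField.adjoin K (Set.range (zv K m F) ∪ {deltav K m F}) = ⊤ := by
  set E := IntermediateField.adjoin K (Set.range (zv K m F) ∪ {deltav K m F}) with hE
  have hzE : ∀ n, zv K m F n ∈ E :=
    fun n => IntermediateField.subset_adjoin K _ (Or.inl ⟨n, rfl⟩)
  have hdE : deltav K m F ∈ E :=
    IntermediateField.subset_adjoin K _ (Or.inr rfl)
  have hFE : ∀ n, Fc K m F n ∈ E := fun n => E.algebraMap_mem (F n)
  have hy0 : yv K m 0 ≠ 0 := yv_ne_zero K m 0
  have hby : boldy K m ≠ 0 := boldy_ne_zero K m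
  have hsq : boldy K m * boldy K m ≠ boldF K m F := boldy_sq_ne K m F hF
  -- the entries of `Qr m`
  obtain ⟨h1, h2⟩ := Qr_spec K m F m
  have h3 := Qr_det K m F m
  obtain ⟨haE, hbE, hcE, hdE'⟩ := Qr_mem K m F E hzE m
  set a := (Qr K m F m).1
  set b := (Qr K m F m).2.1
  set c := (Qr K m F m).2.2.1
  set d := (Qr K m F m).2.2.2
  -- simplify the index `-(m : ZMod m) = 0` and the products
  have hm0 : ((m : ℕ) : ZMod m) = 0 := ZMod.natCast_self m
  have hprody : (∏ j ∈ Finset.range m, yv K m (-(j : ZMod m))) = boldy K m := by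
    rw [prod_range_zmod K m (fun n => yv K m (-n))]
    exact Fintype.prod_equiv (Equiv.neg (ZMod m)) _ _ (fun x => rfl)
  have hprodF : (∏ j ∈ Finset.range m, Fc K m F (-((j : ZMod m) + 1))) = boldF K m F := by
    rw [prod_range_zmod K m (fun n => Fc K m F (-(n + 1)))]
    refine Fintype.prod_equiv ((Equiv.addRight (1 : ZMod m)).trans (Equiv.neg (ZMod m))) _ _
      (fun x => rfl)
  rw [hm0, neg_zero, hprody] at h1
  rw [hprody] at h2
  rw [hprodF] at h3
  -- h1 : a * y0 + b = 𝐲 * y0 ; h2 : c * y0 + d = 𝐲 ; h3 : a*d - b*c = 𝐅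
  -- eigenvalue equation: 𝐲² - (a+d) 𝐲 + 𝐅 = 0
  have hquad : boldy K m * boldy K m - (a + d) * boldy K m + boldF K m F = 0 := by
    have hq0 : ((a - boldy K m) * (d - boldy K m) - b * c) * yv K m 0 = 0 := by
      linear_combination (d - boldy K m) * h1 - b * h2
    have hq : (a - boldy K m) * (d - boldy K m) - b * c = 0 :=
      by
        rcases mul_eq_zero.mp hq0 with h | h
        · exact h
        · exact absurd h hy0
    linear_combination hq - h3
  -- δ 𝐲 = 𝐲² - 𝐅
  have hdel : deltav K m F * boldy K m = boldy K m * boldy K m - boldF K m F := by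
    unfold deltav
    field_simp
  -- 2 ≠ 0
  have h2K : (2 : K) ≠ 0 := Ring.two_ne_zero hchar
  have h2L : (2 : Lm K m) ≠ 0 := by
    intro h
    apply h2K
    have : algebraMap K (Lm K m) 2 = algebraMap K (Lm K m) 0 := by
      rw [map_ofNat, map_zero]; exact h
    exact (algebraMap K (Lm K m)).injective this
  -- 𝐲 ∈ E
  have h2y : 2 * boldy K m = (a + d) + deltav K m F := by
    have h0 : (2 * boldy K m - ((a + d) + deltav K m F)) * boldy K m = 0 := by
      linear_combination hquad - hdel
    rcases mul_eq_zero.mp h0 with h | h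
    · linear_combination h
    · exact absurd h hby
  have hyE : boldy K m ∈ E := by
    have : boldy K m = ((a + d) + deltav K m F) / 2 := by
      rw [eq_div_iff h2L]; linear_combination h2y
    rw [this]
    have h2E : (2 : Lm K m) ∈ E := by
      have : (2 : Lm K m) = algebraMap K (Lm K m) 2 := by rw [map_ofNat]
      rw [this]; exact E.algebraMap_mem 2
    exact div_mem (add_mem (add_mem haE hdE') hdE) h2E
  -- y₀ ∈ E
  have hy0E : yv K m 0 ∈ E := by
    by_cases hc : c = 0
    · -- then d = 𝐲, a 𝐲 = 𝐅 and δ y₀ = b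
      have hd : d = boldy K m := by linear_combination h2 - yv K m 0 * hc
      have ha : a * boldy K m = boldF K m F := by
        linear_combination h3 - a * hd + b * hc
      have hdelta_ne : deltav K m F ≠ 0 := by
        intro h0
        apply hsq
        linear_combination boldy K m * h0 - hdel
      have hb : deltav K m F * yv K m 0 * boldy K m = b * boldy K m := by
        linear_combination yv K m 0 * hdel - boldy K m * h1 + yv K m 0 * ha
      have hb' : deltav K m F * yv K m 0 = b :=
        mul_right_cancel₀ hby hb
      have : yv K m 0 = b / deltav K m F := by
        rw [eq_div_iff hdelta_ne]; linear_combination hb'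
      rw [this]
      exact div_mem hbE hdE
    · have : yv K m 0 = (boldy K m - d) / c := by
        rw [eq_div_iff hc]; linear_combination h2
      rw [this]
      exact div_mem (sub_mem hyE hdE') hcE
  -- all yₙ ∈ E
  have hFcne : ∀ n, Fc K m F n ≠ 0 := Fc_ne_zero K m F hF
  have hyk : ∀ k : ℕ, yv K m (k : ZMod m) ∈ E := by
    intro k
    induction k with
    | zero => simpa using hy0E
    | succ k ih =>
        have key := zv_mul K m F (k : ZMod m)
        have hne : zv K m F (k : ZMod m) - yv K m (k : ZMod m) ≠ 0 := by
          intro h0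
          apply hFcne (k : ZMod m)
          linear_combination yv K m ((k : ZMod m) + 1) * h0 - key
        have heq : yv K m ((k : ZMod m) + 1)
            = Fc K m F (k : ZMod m) / (zv K m F (k : ZMod m) - yv K m (k : ZMod m)) := by
          rw [eq_div_iff hne]; linear_combination key
        have : (((k + 1 : ℕ)) : ZMod m) = (k : ZMod m) + 1 := by push_cast; ring
        rw [this, heq]
        exact div_mem (hFE _) (sub_mem (hzE _) ih)
  have hyE' : ∀ n : ZMod m, yv K m n ∈ E := by
    intro n
    have := hyk n.val
    rwa [ZMod.natCast_rightInverse n] at this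
  -- conclude
  rw [eq_top_iff]
  intro x _
  obtain ⟨p, q, hq, hx⟩ := IsFractionRing.div_surjective (A := MvPolynomial (ZMod m) K) x
  have halg : ∀ r : MvPolynomial (ZMod m) K,
      algebraMap (MvPolynomial (ZMod m) K) (Lm K m) r ∈ E := by
    intro r
    induction r using MvPolynomial.induction_on with
    | C s =>
        rw [← MvPolynomial.algebraMap_eq,
          ← IsScalarTower.algebraMap_apply K (MvPolynomial (ZMod m) K) (Lm K m)]
        exact E.algebraMap_mem s
    | add p q hp hq =>
        rw [RingHom.map_add (algebraMap (MvPolynomial (ZMod m) K) (Lm K m))]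
        exact add_mem hp hq
    | mul_X p n hp =>
        rw [RingHom.map_mul (algebraMap (MvPolynomial (ZMod m) K) (Lm K m))]
        exact mul_mem hp (hyE' n)
  rw [← hx]
  exact div_mem (halg p) (halg q)
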